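/- arXiv:2107.11925 — 4 statements merged into one kernel-verified Lean document; each statement's English description precedes it below -/
import Mathlib

section
/- Fix λ < 1 with λ ≠ 0 and q = 1 − λ > 0, a measure ν on 𝒳, measurable F : 𝒳 → ℝ^d, and y ∈ ℝ^d. Let p(·;ϑ*) be a member of the corresponding λ-exponential family with ϑ* ∈ Ω, satisfying 0 < ∫ p(x;ϑ*)^q dν < ∞ and escort expectation ∫ F(x)·ℰ_q[p(·;ϑ*)](x) dν(x) = y. Then for every probability measure P equivalent to ν with density p = dP/dν satisfying 0 < ∫ p^q dν < ∞ and ∫ F·ℰ_q[p] dν = y, one has H_q(p(·;ϑ*)) ≥ H_q(p), with equality if and only if p = p(·;ϑ*) ν-a.e. In other words, p(·;ϑ*) is the unique maximizer of the Rényi entropy of order q over all distributions equivalent to ν with escort expectation of F equal to y. -/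
open MeasureTheory Real
open scoped RealInnerProductSpace ENNReal BigOperators

noncomputable section


lemma bern_pos' {lam u : ℝ} (h0 : 0 < lam) (h1 : lam < 1) (hu : 0 < u) :
    u ^ lam ≤ lam * u + (1 - lam) := by
  have h := rpow_one_add_le_one_add_mul_self (s := u - 1) (by linarith) h0.le h1.le
  have e : (1 : ℝ) + (u - 1) = u := by ring
  rw [e] at h
  linarith

lemma bern_pos_strict' {lam u : ℝ} (h0 : 0 < lam) (h1 : lam < 1) (hu : 0 < u) (hne : u ≠ 1) :
    u ^ lam < lam * u + (1 - lam) := by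
  have h := rpow_one_add_lt_one_add_mul_self (s := u - 1) (by linarith)
    (sub_ne_zero.mpr hne) h0 h1
  have e : (1 : ℝ) + (u - 1) = u := by ring
  rw [e] at h
  linarith

lemma bern_neg' {lam u : ℝ} (h0 : lam < 0) (hu : 0 < u) :
    lam * u + (1 - lam) ≤ u ^ lam := by
  have h1 : u ^ lam = Real.exp (lam * Real.log u) := by
    rw [Real.rpow_def_of_pos hu, mul_comm]
  have h2 : lam * Real.log u + 1 ≤ Real.exp (lam * Real.log u) := by
    have := Real.add_one_le_exp (lam * Real.log u); linarith
  have h3 : Real.log u ≤ u - 1 := Real.log_le_sub_one_of_pos hu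
  nlinarith [mul_le_mul_of_nonpos_left h3 h0.le]

lemma bern_neg_strict' {lam u : ℝ} (h0 : lam < 0) (hu : 0 < u) (hne : u ≠ 1) :
    lam * u + (1 - lam) < u ^ lam := by
  have h1 : u ^ lam = Real.exp (lam * Real.log u) := by
    rw [Real.rpow_def_of_pos hu, mul_comm]
  have h2 : lam * Real.log u + 1 ≤ Real.exp (lam * Real.log u) := by
    have := Real.add_one_le_exp (lam * Real.log u); linarith
  have h3 : Real.log u < u - 1 := Real.log_lt_sub_one_of_pos hu hne
  nlinarith [mul_lt_mul_of_neg_left h3 h0]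

/-- Core algebraic reduction: for `t > 0`, `P > 0`, with `u = t^{1/λ}c/P` we have
`P^q (t c^λ) = P u^λ`. -/
lemma core_calc {lam q c t P : ℝ} (hlam0 : lam ≠ 0) (hq : q = 1 - lam) (hc : 0 < c)
    (hP : 0 < P) (ht : 0 < t) :
    ∃ u : ℝ, 0 < u ∧ t ^ (1 / lam) * c = u * P ∧ P ^ q * (t * c ^ lam) = P * u ^ lam := by
  set S := t ^ (1 / lam) * c with hS
  have hSpos : 0 < S := mul_pos (Real.rpow_pos_of_pos ht _) hc
  refine ⟨S / P, div_pos hSpos hP, by field_simp, ?_⟩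
  have hSlam : S ^ lam = t * c ^ lam := by
    rw [hS, Real.mul_rpow (Real.rpow_nonneg ht.le _) hc.le, ← Real.rpow_mul ht.le,
      one_div_mul_cancel hlam0, Real.rpow_one]
  have hPq : P ^ q * P ^ lam = P := by
    rw [← Real.rpow_add hP, hq]
    norm_num
  have hplam : (0 : ℝ) < P ^ lam := Real.rpow_pos_of_pos hP _
  rw [← hSlam, Real.div_rpow hSpos.le hP.le, mul_div_assoc', eq_div_iff hplam.ne']
  linear_combination S ^ lam * hPq

lemma core_pos {lam q c t P : ℝ} (h0 : 0 < lam) (h1 : lam < 1) (hq : q = 1 - lam)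
    (hc : 0 < c) (hP : 0 < P) :
    P ^ q * (t * c ^ lam) ≤ lam * (max t 0 ^ (1 / lam) * c) + q * P := by
  rcases le_or_gt t 0 with ht | ht
  · rw [max_eq_right ht, Real.zero_rpow (one_div_ne_zero h0.ne'), zero_mul, mul_zero, zero_add]
    have hqP : 0 < q * P := mul_pos (by rw [hq]; linarith) hP
    have hL : P ^ q * (t * c ^ lam) ≤ 0 := by
      apply mul_nonpos_of_nonneg_of_nonpos (Real.rpow_nonneg hP.le _)
      exact mul_nonpos_of_nonpos_of_nonneg ht (Real.rpow_pos_of_pos hc _).le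
    linarith
  · rw [max_eq_left ht.le]
    obtain ⟨u, hu, hSu, hkey⟩ := core_calc h0.ne' hq hc hP ht
    rw [hkey, hSu]
    have := bern_pos' h0 h1 hu
    have := mul_le_mul_of_nonneg_left this hP.le
    rw [hq]
    nlinarith

lemma core_pos_eq {lam q c t P : ℝ} (h0 : 0 < lam) (h1 : lam < 1) (hq : q = 1 - lam)
    (hc : 0 < c) (hP : 0 < P)
    (heq : lam * (max t 0 ^ (1 / lam) * c) + q * P = P ^ q * (t * c ^ lam)) :
    P = max t 0 ^ (1 / lam) * c := by
  rcases le_or_gt t 0 with ht | ht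
  · exfalso
    rw [max_eq_right ht, Real.zero_rpow (one_div_ne_zero h0.ne'), zero_mul, mul_zero,
      zero_add] at heq
    have hqP : 0 < q * P := mul_pos (by rw [hq]; linarith) hP
    have hL : P ^ q * (t * c ^ lam) ≤ 0 := by
      apply mul_nonpos_of_nonneg_of_nonpos (Real.rpow_nonneg hP.le _)
      exact mul_nonpos_of_nonpos_of_nonneg ht (Real.rpow_pos_of_pos hc _).le
    linarith
  · rw [max_eq_left ht.le] at heq ⊢
    obtain ⟨u, hu, hSu, hkey⟩ := core_calc h0.ne' hq hc hP ht
    have hu1 : u = 1 := by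
      by_contra hne
      have hb := bern_pos_strict' h0 h1 hu hne
      have := mul_lt_mul_of_pos_left hb hP
      rw [hkey, hSu, hq] at heq
      nlinarith
    rw [hSu, hu1, one_mul]

lemma core_neg {lam q c t P : ℝ} (h0 : lam < 0) (hq : q = 1 - lam)
    (hc : 0 < c) (hP : 0 < P) (ht : 0 < t) :
    lam * (max t 0 ^ (1 / lam) * c) + q * P ≤ P ^ q * (t * c ^ lam) := by
  rw [max_eq_left ht.le]
  obtain ⟨u, hu, hSu, hkey⟩ := core_calc h0.ne hq hc hP ht
  rw [hkey, hSu]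
  have := bern_neg' h0 hu
  have := mul_le_mul_of_nonneg_left this hP.le
  rw [hq]
  nlinarith

lemma core_neg_eq {lam q c t P : ℝ} (h0 : lam < 0) (hq : q = 1 - lam)
    (hc : 0 < c) (hP : 0 < P) (ht : 0 < t)
    (heq : lam * (max t 0 ^ (1 / lam) * c) + q * P = P ^ q * (t * c ^ lam)) :
    P = max t 0 ^ (1 / lam) * c := by
  rw [max_eq_left ht.le] at heq ⊢
  obtain ⟨u, hu, hSu, hkey⟩ := core_calc h0.ne hq hc hP ht
  have hu1 : u = 1 := by
    by_contra hne
    have hb := bern_neg_strict' h0 hu hne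
    have := mul_lt_mul_of_pos_left hb hP
    rw [hkey, hSu, hq] at heq
    nlinarith
  rw [hSu, hu1, one_mul]

lemma qexp_id' {lam q c t : ℝ} (hlam0 : lam ≠ 0) (hq : q = 1 - lam) (hqpos : 0 < q)
    (hc : 0 < c) :
    (max t 0 ^ (1 / lam) * c) ^ q * (t * c ^ lam) = max t 0 ^ (1 / lam) * c := by
  rcases le_or_gt t 0 with ht | ht
  · rw [max_eq_right ht, Real.zero_rpow (one_div_ne_zero hlam0), zero_mul,
      Real.zero_rpow hqpos.ne', zero_mul]
  · rw [max_eq_left ht.le]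
    have hP : 0 < t ^ (1 / lam) * c := mul_pos (Real.rpow_pos_of_pos ht _) hc
    obtain ⟨u, hu, hSu, hkey⟩ := core_calc hlam0 hq hc hP ht
    have hu1 : u = 1 := by
      have := hSu
      field_simp at this
      nlinarith [hP]
    rw [hkey, hu1, Real.one_rpow, mul_one]

/-- The `q`-deformed exponential `exp_q(t) = [1 + λ t]₊^{1/λ}` (with `q = 1 − λ`), valued in
`[0,∞]`, with the convention `0^{1/λ} = +∞` when `λ < 0`. -/
def qexp (lam t : ℝ) : ℝ≥0∞ :=
  if 0 < 1 + lam * t then ENNReal.ofReal ((1 + lam * t) ^ (1 / lam))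
  else if 0 < lam then 0 else ⊤

/-- Rényi entropy maximization: let `p(·;ϑ*)` be a member of the
λ-exponential family (`ϑ* ∈ Ω`, i.e. `∫ exp_q(ϑ*·F) dν < ∞`), with `0 < ∫ p(·;ϑ*)^q dν < ∞`
and escort expectation `∫ F·ℰ_q[p(·;ϑ*)] dν = y`. Then for every probability density `p`
equivalent to `ν` (i.e. `p > 0` ν-a.e.) with `0 < ∫ p^q dν < ∞` and the same escort
expectation `y`, one has `H_q(p(·;ϑ*)) ≥ H_q(p)`, with equality iff `p = p(·;ϑ*)` ν-a.e. -/
theorem Renyi_entropy_maximization {d : ℕ} {X : Type*} [MeasurableSpace X] (ν : Measure X)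
    (lam q : ℝ) (hlam0 : lam ≠ 0) (hlam1 : lam < 1) (hq : q = 1 - lam)
    (F : X → EuclideanSpace ℝ (Fin d)) (hF : Measurable F)
    (y : EuclideanSpace ℝ (Fin d))
    (ϑs : EuclideanSpace ℝ (Fin d)) (hΩ : ∫⁻ x, qexp lam ⟪ϑs, F x⟫ ∂ν < ⊤)
    (c : ℝ) (hc : 0 < c)
    (ps : X → ℝ) (hps : ∀ x, ps x = (max (1 + lam * ⟪ϑs, F x⟫) 0) ^ (1 / lam) * c)
    (hpsInt : Integrable ps ν) (hpsnorm : ∫ x, ps x ∂ν = 1)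
    (hpsq : Integrable (fun x => ps x ^ q) ν) (hpsqpos : 0 < ∫ x, ps x ^ q ∂ν)
    (hpsF : Integrable (fun x => (ps x ^ q) • F x) ν)
    (hesc : ∫ x, (ps x ^ q) • F x ∂ν = (∫ x, ps x ^ q ∂ν) • y) :
    ∀ p : X → ℝ, Measurable p → (∀ᵐ x ∂ν, 0 < p x) →
      Integrable p ν → (∫ x, p x ∂ν) = 1 →
      Integrable (fun x => p x ^ q) ν → 0 < ∫ x, p x ^ q ∂ν →
      Integrable (fun x => (p x ^ q) • F x) ν →
      (∫ x, (p x ^ q) • F x ∂ν) = (∫ x, p x ^ q ∂ν) • y →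
      ((1 / (1 - q)) * Real.log (∫ x, p x ^ q ∂ν)
          ≤ (1 / (1 - q)) * Real.log (∫ x, ps x ^ q ∂ν) ∧
        ((1 / (1 - q)) * Real.log (∫ x, p x ^ q ∂ν)
            = (1 / (1 - q)) * Real.log (∫ x, ps x ^ q ∂ν) ↔ p =ᵐ[ν] ps)) := by
  intro p hpMeas hppos hpInt hpnorm hpqInt hpqpos hpF hpesc
  have hqpos : 0 < q := by rw [hq]; linarith
  have h1q : 1 - q = lam := by rw [hq]; ring
  set A := ∫ x, p x ^ q ∂ν with hAdef
  set As := ∫ x, ps x ^ q ∂ν with hAsdef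
  have hApos : 0 < A := hpqpos
  have hAspos : 0 < As := hpsqpos
  set K : ℝ := 1 + lam * ⟪ϑs, y⟫ with hKdef
  -- integrability of inner products
  have hinner_ps : Integrable (fun x => ⟪ϑs, ps x ^ q • F x⟫) ν := hpsF.const_inner ϑs
  have hinner_p : Integrable (fun x => ⟪ϑs, p x ^ q • F x⟫) ν := hpF.const_inner ϑs
  -- escort integrals
  have epsK : ∫ x, ps x ^ q * (1 + lam * ⟪ϑs, F x⟫) ∂ν = As * K := by
    have heq : (fun x => ps x ^ q * (1 + lam * ⟪ϑs, F x⟫))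
        = fun x => ps x ^ q + lam * ⟪ϑs, ps x ^ q • F x⟫ := by
      funext x; rw [real_inner_smul_right]; ring
    rw [heq, integral_add hpsq (hinner_ps.const_mul lam), integral_const_mul,
      integral_inner hpsF, hesc, real_inner_smul_right, hKdef]
    ring
  have epK : ∫ x, p x ^ q * (1 + lam * ⟪ϑs, F x⟫) ∂ν = A * K := by
    have heq : (fun x => p x ^ q * (1 + lam * ⟪ϑs, F x⟫))
        = fun x => p x ^ q + lam * ⟪ϑs, p x ^ q • F x⟫ := by
      funext x; rw [real_inner_smul_right]; ring
    rw [heq, integral_add hpqInt (hinner_p.const_mul lam), integral_const_mul,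
      integral_inner hpF, hpesc, real_inner_smul_right, hKdef]
    ring
  -- normalization identity
  have hnorm2 : As * K * c ^ lam = 1 := by
    have hid : ∀ x, ps x = ps x ^ q * (1 + lam * ⟪ϑs, F x⟫) * c ^ lam := by
      intro x
      rw [hps x, mul_assoc]
      exact (qexp_id' hlam0 hq hqpos hc).symm
    calc As * K * c ^ lam = (∫ x, ps x ^ q * (1 + lam * ⟪ϑs, F x⟫) ∂ν) * c ^ lam := by
          rw [epsK]
      _ = ∫ x, ps x ^ q * (1 + lam * ⟪ϑs, F x⟫) * c ^ lam ∂ν := (integral_mul_const _ _).symm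
      _ = ∫ x, ps x ∂ν := integral_congr_ae (Filter.Eventually.of_forall fun x => (hid x).symm)
      _ = 1 := hpsnorm
  have hKc : K * c ^ lam = 1 / As := by
    rw [eq_div_iff hAspos.ne']
    linarith [hnorm2]
  -- integral of p^q * g * c^lam
  have epg : ∫ x, p x ^ q * (1 + lam * ⟪ϑs, F x⟫) * c ^ lam ∂ν = A / As := by
    rw [integral_mul_const, epK, mul_assoc, hKc]
    ring
  -- the comparison function
  set h : X → ℝ := fun x =>
    lam * ps x + q * p x - p x ^ q * (1 + lam * ⟪ϑs, F x⟫) * c ^ lam with hhdef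
  have hIntpg : Integrable (fun x => p x ^ q * (1 + lam * ⟪ϑs, F x⟫) * c ^ lam) ν := by
    have hI : Integrable (fun x => (p x ^ q + lam * ⟪ϑs, p x ^ q • F x⟫) * c ^ lam) ν :=
      (hpqInt.add (hinner_p.const_mul lam)).mul_const _
    refine hI.congr (Filter.Eventually.of_forall fun x => ?_)
    simp only [real_inner_smul_right]; ring
  have hIntH : Integrable h ν :=
    ((hpsInt.const_mul lam).add (hpInt.const_mul q)).sub hIntpg
  have hI1 : Integrable (fun x => lam * ps x + q * p x) ν :=
    (hpsInt.const_mul lam).add (hpInt.const_mul q)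
  have hIH : ∫ x, h x ∂ν = 1 - A / As := by
    simp only [hhdef]
    rw [integral_sub hI1 hIntpg,
      integral_add (hpsInt.const_mul lam) (hpInt.const_mul q),
      integral_const_mul, integral_const_mul, hpsnorm, hpnorm, epg, hq]
    ring
  -- a.e. positivity of the base for lam < 0
  have hgpos : lam < 0 → ∀ᵐ x ∂ν, 0 < 1 + lam * ⟪ϑs, F x⟫ := by
    intro hneg
    have hgmeas : Measurable fun x => 1 + lam * ⟪ϑs, F x⟫ := by
      have hi : Measurable fun x => ⟪ϑs, F x⟫ := (innerSL ℝ ϑs).continuous.measurable.comp hF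
      exact (hi.const_mul lam).const_add 1
    have hqmeas : Measurable fun x => qexp lam ⟪ϑs, F x⟫ := by
      simp only [qexp]
      refine Measurable.ite ?_ ?_ measurable_const
      · exact hgmeas measurableSet_Ioi
      · exact ENNReal.measurable_ofReal.comp (hgmeas.pow_const _)
    have hlt := ae_lt_top hqmeas hΩ.ne
    filter_upwards [hlt] with x hx
    by_contra hg
    push_neg at hg
    have : qexp lam ⟪ϑs, F x⟫ = ⊤ := by
      simp only [qexp, if_neg (not_lt.mpr hg), if_neg (not_lt.mpr hneg.le)]
    rw [this] at hx
    exact (lt_irrefl _ hx)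
  rcases lt_or_gt_of_ne hlam0 with hneg | hpos
  · -- case lam < 0
    have haeH : ∀ᵐ x ∂ν, h x ≤ 0 := by
      filter_upwards [hppos, hgpos hneg] with x hpx hgx
      have hcore := core_neg (t := 1 + lam * ⟪ϑs, F x⟫) (P := p x) hneg hq hc hpx hgx
      simp only [hhdef, sub_nonpos]
      rw [hps x, mul_assoc]
      linarith
    have hALe : As ≤ A := by
      have h0 : ∫ x, h x ∂ν ≤ 0 := integral_nonpos_of_ae haeH
      rw [hIH] at h0
      have : 1 ≤ A / As := by linarith
      exact (one_le_div hAspos).mp this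
    have hlog : Real.log As ≤ Real.log A := Real.log_le_log hAspos hALe
    have hcoef : 1 / (1 - q) ≤ 0 := by
      rw [h1q]
      exact le_of_lt (div_neg_of_pos_of_neg one_pos hneg)
    refine ⟨mul_le_mul_of_nonpos_left hlog hcoef, ?_, ?_⟩
    · intro heq
      have hAA : A = As := by
        have hne : (1 / (1 - q)) ≠ 0 := by
          rw [h1q]; exact div_ne_zero one_ne_zero hlam0
        have hlogeq : Real.log A = Real.log As := mul_left_cancel₀ hne heq
        exact Real.log_injOn_pos (Set.mem_Ioi.mpr hApos) (Set.mem_Ioi.mpr hAspos) hlogeq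
      have hH0 : ∫ x, (fun x => -h x) x ∂ν = 0 := by
        rw [integral_neg, hIH, hAA, div_self hAspos.ne']
        ring
      have hae0 : (fun x => -h x) =ᵐ[ν] 0 := by
        refine (integral_eq_zero_iff_of_nonneg_ae ?_ hIntH.neg).mp hH0
        filter_upwards [haeH] with x hx
        simpa using hx
      filter_upwards [hae0, hppos, hgpos hneg] with x hx hpx hgx
      simp only [Pi.zero_apply, neg_eq_zero] at hx
      rw [hps x]
      refine core_neg_eq hneg hq hc hpx hgx ?_
      simp only [hhdef] at hx
      rw [hps x] at hx
      rw [← mul_assoc]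
      linarith
    · intro heq
      have : A = As := by
        rw [hAdef, hAsdef]
        apply integral_congr_ae
        filter_upwards [heq] with x hx
        rw [hx]
      rw [this]
  · -- case 0 < lam
    have haeH : ∀ᵐ x ∂ν, 0 ≤ h x := by
      filter_upwards [hppos] with x hpx
      have hcore := core_pos (t := 1 + lam * ⟪ϑs, F x⟫) (P := p x) hpos hlam1 hq hc hpx
      simp only [hhdef, sub_nonneg]
      rw [hps x, mul_assoc]
      linarith
    have hALe : A ≤ As := by
      have h0 : 0 ≤ ∫ x, h x ∂ν := integral_nonneg_of_ae haeH
      rw [hIH] at h0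
      have : A / As ≤ 1 := by linarith
      exact (div_le_one hAspos).mp this
    have hlog : Real.log A ≤ Real.log As := Real.log_le_log hApos hALe
    have hcoef : 0 ≤ 1 / (1 - q) := by
      rw [h1q]
      positivity
    refine ⟨mul_le_mul_of_nonneg_left hlog hcoef, ?_, ?_⟩
    · intro heq
      have hAA : A = As := by
        have hne : (1 / (1 - q)) ≠ 0 := by
          rw [h1q]; exact div_ne_zero one_ne_zero hlam0
        have hlogeq : Real.log A = Real.log As := mul_left_cancel₀ hne heq
        exact Real.log_injOn_pos (Set.mem_Ioi.mpr hApos) (Set.mem_Ioi.mpr hAspos) hlogeq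
      have hH0 : ∫ x, h x ∂ν = 0 := by
        rw [hIH, hAA, div_self hAspos.ne']
        ring
      have hae0 : h =ᵐ[ν] 0 := (integral_eq_zero_iff_of_nonneg_ae haeH hIntH).mp hH0
      filter_upwards [hae0, hppos] with x hx hpx
      simp only [Pi.zero_apply] at hx
      rw [hps x]
      refine core_pos_eq hpos hlam1 hq hc hpx ?_
      simp only [hhdef] at hx
      rw [hps x] at hx
      rw [← mul_assoc]
      linarith
    · intro heq
      have : A = As := by
        rw [hAdef, hAsdef]
        apply integral_congr_ae
        filter_upwards [heq] with x hx
        rw [hx]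
      rw [this]
end
end

section
/- Fix λ < 1 with λ ≠ 0 and let α = 1 − 2λ. Let 𝓜 = { p(x;ϑ) = (1 + λ ϑ·F(x))^{1/λ}·e^{−φ_λ(ϑ)} : ϑ ∈ Ω } be a λ-exponential family such that 1 + λ ϑ·F(x) > 0 for all ϑ ∈ Ω and all x, and with Ω convex. Let ϑ^{(0)},…,ϑ^{(d)} ∈ Ω and p_i = p(·;ϑ^{(i)}). Then for every w = (w₀,…,w_d) with w_i ≥ 0 and Σ_i w_i = 1, the α-mixture p_α(·;w) (the normalized α-mean of p₀,…,p_d) exists and belongs to 𝓜: p_α(x;w) = p(x;ϑ(w)) where ϑ(w) = Σ_{i=0}^d [ w_i e^{−λφ_λ(ϑ^{(i)})} / Σ_j w_j e^{−λφ_λ(ϑ^{(j)})} ]·ϑ^{(i)}. -/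
open MeasureTheory Real
open scoped RealInnerProductSpace ENNReal BigOperators

noncomputable section

/-- Let `𝓜 = { p(·;ϑ) = (1 + λϑ·F)^{1/λ} e^{−φ_λ(ϑ)} : ϑ ∈ Ω }` be a
λ-exponential family with `1 + λϑ·F(x) > 0` for all `ϑ ∈ Ω` and all `x`, and `Ω` convex.
Then for `p_i = p(·;ϑ^{(i)})`, `i = 0,…,d`, and any mixture weights `w`, the α-mixture
(`α = 1 − 2λ`, so `(1−α)/2 = λ`) exists and belongs to `𝓜`, namely
`p_α(·;w) = p(·;ϑ(w))` with `ϑ(w) = Σ_i [w_i e^{−λφ_λ(ϑ^{(i)})}/Σ_j w_j e^{−λφ_λ(ϑ^{(j)})}]·ϑ^{(i)}`: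
`ϑ(w) ∈ Ω` and `(Σ_i w_i p_i^λ)^{1/λ}` is a positive multiple of `p(·;ϑ(w))`. -/
theorem alphaMixture_in_lambdaExpFamily {d : ℕ} {X : Type*} [MeasurableSpace X]
    (ν : Measure X)
    (lam : ℝ) (hlam0 : lam ≠ 0) (hlam1 : lam < 1)
    (F : X → EuclideanSpace ℝ (Fin d))
    (Ω : Set (EuclideanSpace ℝ (Fin d))) (hΩconv : Convex ℝ Ω)
    (φ : EuclideanSpace ℝ (Fin d) → ℝ)
    (hpos : ∀ ϑ ∈ Ω, ∀ x, 0 < 1 + lam * ⟪ϑ, F x⟫)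
    (p : EuclideanSpace ℝ (Fin d) → X → ℝ)
    (hp : ∀ ϑ x, p ϑ x = (1 + lam * ⟪ϑ, F x⟫) ^ (1 / lam) * Real.exp (-φ ϑ))
    (hnorm : ∀ ϑ ∈ Ω, ∫ x, p ϑ x ∂ν = 1)
    (ϑs : Fin (d + 1) → EuclideanSpace ℝ (Fin d)) (hϑs : ∀ i, ϑs i ∈ Ω)
    (w : Fin (d + 1) → ℝ) (hw0 : ∀ i, 0 ≤ w i) (hw1 : ∑ i, w i = 1) :
    (∑ i, (w i * Real.exp (-lam * φ (ϑs i)) /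
        ∑ j, w j * Real.exp (-lam * φ (ϑs j))) • ϑs i) ∈ Ω ∧
    ∃ C : ℝ, 0 < C ∧ ∀ x,
      (∑ i, w i * p (ϑs i) x ^ lam) ^ (1 / lam)
        = C * p (∑ i, (w i * Real.exp (-lam * φ (ϑs i)) /
            ∑ j, w j * Real.exp (-lam * φ (ϑs j))) • ϑs i) x := by
  set a : Fin (d + 1) → ℝ := fun i => w i * Real.exp (-lam * φ (ϑs i)) with ha
  have ha0 : ∀ i, 0 ≤ a i := fun i => mul_nonneg (hw0 i) (Real.exp_pos _).le
  set S : ℝ := ∑ j, a j with hS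
  have hSpos : 0 < S := by
    obtain ⟨i, hi⟩ : ∃ i, 0 < w i := by
      by_contra h
      push_neg at h
      have : ∀ i, w i = 0 := fun i => le_antisymm (h i) (hw0 i)
      simp [this] at hw1
    exact Finset.sum_pos' (fun j _ => ha0 j)
      ⟨i, Finset.mem_univ i, mul_pos hi (Real.exp_pos _)⟩
  set c : Fin (d + 1) → ℝ := fun i => a i / S with hc
  have hc0 : ∀ i, 0 ≤ c i := fun i => div_nonneg (ha0 i) hSpos.le
  have hc1 : ∑ i, c i = 1 := by
    rw [hc]; rw [← Finset.sum_div]; exact div_self hSpos.ne'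
  set ϑw : EuclideanSpace ℝ (Fin d) := ∑ i, c i • ϑs i with hϑw
  have hmem : ϑw ∈ Ω :=
    hΩconv.sum_mem (fun i _ => hc0 i) hc1 (fun i _ => hϑs i)
  refine ⟨hmem, S ^ (1 / lam) * Real.exp (φ ϑw), by positivity, fun x => ?_⟩
  have hinner : ⟪ϑw, F x⟫ = ∑ i, c i * ⟪ϑs i, F x⟫ := by
    rw [hϑw, sum_inner]
    simp [real_inner_smul_left, Finset.mul_sum, mul_assoc]
  have hgw : 0 < 1 + lam * ⟪ϑw, F x⟫ := hpos _ hmem x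
  have hterm : ∀ i, w i * p (ϑs i) x ^ lam = a i + lam * (a i * ⟪ϑs i, F x⟫) := by
    intro i
    have hb : 0 < 1 + lam * ⟪ϑs i, F x⟫ := hpos _ (hϑs i) x
    rw [hp, Real.mul_rpow (Real.rpow_nonneg hb.le _) (Real.exp_pos _).le,
      ← Real.rpow_mul hb.le, one_div_mul_cancel hlam0, Real.rpow_one,
      ← Real.exp_mul, ha]
    ring_nf
  have hSgw : S * ⟪ϑw, F x⟫ = ∑ i, a i * ⟪ϑs i, F x⟫ := by
    rw [hinner, Finset.mul_sum]
    refine Finset.sum_congr rfl fun i _ => ?_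
    rw [hc]
    field_simp
  have hsum : (∑ i, w i * p (ϑs i) x ^ lam) = S * (1 + lam * ⟪ϑw, F x⟫) := by
    simp only [hterm, Finset.sum_add_distrib, ← Finset.mul_sum, ← hSgw, hS]
    ring
  rw [hsum, Real.mul_rpow hSpos.le hgw.le, hp]
  rw [Real.exp_neg]
  have hepos : (0:ℝ) < Real.exp (φ ϑw) := Real.exp_pos _
  field_simp
end
end

section
/- Fix λ < 1 with λ ≠ 0 and q = 1 − λ > 0. Let p₀,…,p_d be probability densities w.r.t. ν with 0 < ∫ p_i^q dν < ∞, and let p̃_i = p_i^q / ∫ p_i^q dν. For η in the positive orthant define Z(η) = ∫ (Σ_{i=0}^d η_i p̃_i)^{1/q} dν and ψ(η) = (q/(1−q))·log Z(η); for η in the open unit simplex let p_η = Z(η)^{−1}(Σ_i η_i p̃_i)^{1/q} be the λ-mixture density. Assume Z(η) < ∞ and that Z can be differentiated under the integral sign for η in the open unit simplex. Then: (a) for all η, η' in the open unit simplex, 1 + λ ∇ψ(η')·(η − η') = (Z(η)^q / Z(η')^q)·∫ p_η^q p_{η'}^{1−q} dν > 0 and ψ(η) − ψ(η') − (1/λ)·log(1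 + λ ∇ψ(η')·(η − η')) = (1/(q−1))·log ∫ p_η^q p_{η'}^{1−q} dν ≥ 0, i.e. the λ-logarithmic divergence of ψ is the Rényi divergence H_q(p_η ‖ p_{η'}); and (b) the function (1/λ)(e^{λψ} − 1) is convex on the open unit simplex. -/
open MeasureTheory Real
open scoped RealInnerProductSpace

/-!
Write `u_η = ∑ i, η i • p̃ i` and `I(η, η') = ∫ u_η u_{η'}^{1/q - 1} dν`. The gradient formula makes
`1 + λ ⟪∇ψ(η'), η - η'⟫` affine in `η`, equal to `1` at `η = η'` where `I(η', η') = Z(η')`, hence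
equal to `I(η, η') / Z(η')`; the Rényi integral `∫ p_η^q p_{η'}^{1-q} dν` is the same `I(η, η')`
divided by `Z(η)^q Z(η')^{1-q}`. Taking logarithms gives (a), and the sign is that of the Rényi
divergence (weighted AM-GM for `q < 1`, Bernoulli's inequality for `q > 1`). Exponentiating the
nonnegativity of the λ-logarithmic divergence shows that `e^{λψ(η')} ∇ψ(η')` is a subgradient of
`(e^{λψ} - 1) / λ` at every `η'`, which gives (b).
-/

namespace Real

lemma mul_rpow_sub_one {x s : ℝ} (hx : 0 ≤ x) (hs : s ≠ 0) : x * x ^ (s - 1) = x ^ s := by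
  rw [← rpow_one_add' hx (by simpa using hs), add_sub_cancel]

lemma mul_rpow_sub_one_le {a b K s : ℝ} (hb : 0 ≤ b) (hs : s ≠ 0) (h : a ≤ K * b) :
    a * b ^ (s - 1) ≤ K * b ^ s := by
  rw [← mul_rpow_sub_one hb hs, ← mul_assoc]
  exact mul_le_mul_of_nonneg_right h (rpow_nonneg hb _)

lemma le_mul_rpow_sub_one {a b K s : ℝ} (hb : 0 ≤ b) (hs : s ≠ 0) (h : K * b ≤ a) :
    K * b ^ s ≤ a * b ^ (s - 1) := by
  rw [← mul_rpow_sub_one hb hs, ← mul_assoc]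
  exact mul_le_mul_of_nonneg_right h (rpow_nonneg hb _)

lemma div_rpow_one_div {a c q : ℝ} (ha : 0 ≤ a) (hc : 0 ≤ c) (hq : q ≠ 0) :
    (a ^ q / c) ^ (1 / q) = a / c ^ (1 / q) := by
  rw [div_rpow (rpow_nonneg ha _) hc, ← rpow_mul ha, mul_one_div_cancel hq, rpow_one]

lemma rpow_one_div_div_rpow_mul {u v A B q : ℝ} (hu : 0 ≤ u) (hv : 0 ≤ v) (hA : 0 ≤ A)
    (hB : 0 ≤ B) (hq : q ≠ 0) :
    (u ^ (1 / q) / A) ^ q * (v ^ (1 / q) / B) ^ (1 - q)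
      = u * v ^ (1 / q - 1) / (A ^ q * B ^ (1 - q)) := by
  rw [div_rpow (rpow_nonneg hu _) hA, div_rpow (rpow_nonneg hv _) hB, ← rpow_mul hu,
    ← rpow_mul hv, one_div_mul_cancel hq, rpow_one, mul_sub, mul_one, one_div_mul_cancel hq]
  ring

lemma add_le_rpow_mul_rpow_of_one_le {a b q : ℝ} (ha : 0 ≤ a) (hb : 0 ≤ b) (hq : 1 ≤ q)
    (hab : b = 0 → a = 0) : q * a + (1 - q) * b ≤ a ^ q * b ^ (1 - q) := by
  rcases hb.eq_or_lt with rfl | hb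
  · simp [hab rfl, zero_rpow (by linarith : q ≠ 0)]
  · have hber := one_add_mul_self_le_rpow_one_add (s := a / b - 1)
      (by linarith [div_nonneg ha hb.le]) hq
    rw [add_sub_cancel] at hber
    calc q * a + (1 - q) * b = b * (1 + q * (a / b - 1)) := by field_simp; ring
      _ ≤ b * (a / b) ^ q := mul_le_mul_of_nonneg_left hber hb.le
      _ = a ^ q * b ^ (1 - q) := by
        rw [div_rpow ha hb.le, rpow_sub hb, rpow_one]; field_simp

lemma le_one_div_mul_exp_sub_one {lam t D : ℝ} (hlam : lam ≠ 0) (ht : 0 < 1 + lam * t)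
    (h : 1 / lam * log (1 + lam * t) ≤ D) : t ≤ 1 / lam * (exp (lam * D) - 1) := by
  rw [one_div_mul_eq_div] at h
  rw [one_div_mul_eq_div, mul_comm lam D]
  rcases hlam.lt_or_gt with hneg | hpos
  · rw [div_le_iff_of_neg hneg] at h
    rw [le_div_iff_of_neg hneg]
    have := (exp_le_exp.2 h).trans_eq (exp_log ht)
    linarith
  · rw [div_le_iff₀ hpos] at h
    rw [le_div_iff₀ hpos]
    have := (exp_log ht).symm.trans_le (exp_le_exp.2 h)
    linarith

end Real

section MixtureBounds

variable {ι X : Type*} [Fintype ι] {f : ι → X → ℝ}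

lemma mixture_nonneg (hf0 : ∀ i x, 0 ≤ f i x) {a : ι → ℝ} (ha : ∀ i, 0 ≤ a i) (x : X) :
    0 ≤ ∑ i, a i * f i x :=
  Finset.sum_nonneg fun i _ => mul_nonneg (ha i) (hf0 i x)

lemma mul_le_mixture (hf0 : ∀ i x, 0 ≤ f i x) {b : ι → ℝ} (hb : ∀ i, 0 ≤ b i) (i : ι) (x : X) :
    b i * f i x ≤ ∑ j, b j * f j x :=
  Finset.single_le_sum (f := fun j => b j * f j x) (fun j _ => mul_nonneg (hb j) (hf0 j x))
    (Finset.mem_univ i)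

lemma mixture_le_mul_mixture (hf0 : ∀ i x, 0 ≤ f i x) {a b : ι → ℝ} (ha : ∀ i, 0 ≤ a i)
    (hb : ∀ i, 0 < b i) (x : X) :
    ∑ i, a i * f i x ≤ (∑ i, a i / b i) * ∑ i, b i * f i x := by
  rw [Finset.sum_mul]
  refine Finset.sum_le_sum fun i _ => ?_
  calc a i * f i x = a i / b i * (b i * f i x) := by field_simp [(hb i).ne']
    _ ≤ a i / b i * ∑ j, b j * f j x := by
      have hc : 0 ≤ a i / b i := div_nonneg (ha i) (hb i).le
      gcongr
      exact mul_le_mixture hf0 (fun j => (hb j).le) i x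

end MixtureBounds

lemma one_add_mul_inner_sub_eq {ι : Type*} [Fintype ι] {g η η' : EuclideanSpace ℝ ι}
    {G : ι → ℝ} {lam Z : ℝ} (hlam : lam ≠ 0) (hZ : Z ≠ 0) (hg : ∀ i, g i = 1 / lam * G i / Z)
    (hself : ∑ i, η' i * G i = Z) :
    1 + lam * ⟪g, η - η'⟫ = (∑ i, η i * G i) / Z := by
  simp only [PiLp.inner_apply, PiLp.sub_apply, RCLike.inner_apply, conj_trivial, hg]
  have hsum : ∑ i, (η i - η' i) * (1 / lam * G i / Z)
      = ((∑ i, η i * G i) - ∑ i, η' i * G i) / (lam * Z) := by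
    rw [← Finset.sum_sub_distrib, Finset.sum_div]
    congr with i
    field_simp
  rw [hsum, hself]
  field_simp
  ring

lemma convexOn_of_le_add_inner {E : Type*} [NormedAddCommGroup E] [InnerProductSpace ℝ E]
    {S : Set E} {f : E → ℝ} {g : E → E} (hS : Convex ℝ S)
    (h : ∀ x ∈ S, ∀ z ∈ S, f z + ⟪g z, x - z⟫ ≤ f x) : ConvexOn ℝ S f := by
  refine ⟨hS, fun x hx y hy a b ha hb hab => ?_⟩
  set z := a • x + b • y
  have hz : z ∈ S := hS hx hy ha hb hab
  have hbal : a * ⟪g z, x - z⟫ + b * ⟪g z, y - z⟫ = 0 := by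
    rw [← real_inner_smul_right, ← real_inner_smul_right, ← inner_add_right, smul_sub, smul_sub,
      sub_add_sub_comm, ← add_smul, hab, one_smul, sub_self, inner_zero_right]
  have hx' := mul_le_mul_of_nonneg_left (h x hx z hz) ha
  have hy' := mul_le_mul_of_nonneg_left (h y hy z hz) hb
  have hsplit : f z = a * f z + b * f z := by rw [← add_mul, hab, one_mul]
  simp only [smul_eq_mul]
  linarith

lemma convex_openSimplex {ι : Type*} [Fintype ι] :
    Convex ℝ {η : EuclideanSpace ℝ ι | (∀ i, 0 < η i) ∧ ∑ i, η i = 1} := by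
  rintro x ⟨hx, hx1⟩ y ⟨hy, hy1⟩ a b ha hb hab
  refine ⟨fun i => ?_, ?_⟩
  · exact convex_Ioi (0 : ℝ) (Set.mem_Ioi.2 (hx i)) (Set.mem_Ioi.2 (hy i)) ha hb hab
  · simp only [PiLp.add_apply, PiLp.smul_apply, smul_eq_mul, Finset.sum_add_distrib,
      ← Finset.mul_sum, hx1, hy1, mul_one, hab]

lemma convexOn_one_div_mul_exp_sub_one {E : Type*} [NormedAddCommGroup E]
    [InnerProductSpace ℝ E] {S : Set E} {ψ : E → ℝ} {g : E → E} {lam : ℝ} (hlam : lam ≠ 0)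
    (hS : Convex ℝ S)
    (h : ∀ x ∈ S, ∀ z ∈ S, 0 < 1 + lam * ⟪g z, x - z⟫ ∧
      0 ≤ ψ x - ψ z - 1 / lam * log (1 + lam * ⟪g z, x - z⟫)) :
    ConvexOn ℝ S (fun x => 1 / lam * (exp (lam * ψ x) - 1)) := by
  refine convexOn_of_le_add_inner (g := fun z => exp (lam * ψ z) • g z) hS fun x hx z hz => ?_
  obtain ⟨hpos, hlog⟩ := h x hx z hz
  have hexp : exp (lam * ψ z) * exp (lam * (ψ x - ψ z)) = exp (lam * ψ x) := by
    rw [← exp_add]; ring_nf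
  rw [real_inner_smul_left]
  calc 1 / lam * (exp (lam * ψ z) - 1) + exp (lam * ψ z) * ⟪g z, x - z⟫
      ≤ 1 / lam * (exp (lam * ψ z) - 1)
        + exp (lam * ψ z) * (1 / lam * (exp (lam * (ψ x - ψ z)) - 1)) := by
          gcongr; exact le_one_div_mul_exp_sub_one hlam hpos (sub_nonneg.1 hlog)
    _ = 1 / lam * (exp (lam * ψ x) - 1) := by rw [← hexp]; ring

section Mixture

variable {ι X : Type*} [Fintype ι] [MeasurableSpace X] {ν : Measure X} {f : ι → X → ℝ} {s : ℝ}

lemma integrable_mul_rpow_sub_one_of_le {g h : X → ℝ} {K : ℝ} (hs : s ≠ 0)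
    (hg : AEMeasurable g ν) (hh : AEMeasurable h ν) (hg0 : ∀ x, 0 ≤ g x) (hh0 : ∀ x, 0 ≤ h x)
    (hgh : ∀ x, g x ≤ K * h x) (hint : Integrable (fun x => h x ^ s) ν) :
    Integrable (fun x => g x * h x ^ (s - 1)) ν :=
  (hint.const_mul K).mono' (hg.mul (hh.pow_const _)).aestronglyMeasurable <| ae_of_all _ fun x => by
    rw [norm_of_nonneg (mul_nonneg (hg0 x) (rpow_nonneg (hh0 x) _))]
    exact mul_rpow_sub_one_le (hh0 x) hs (hgh x)

lemma integral_mul_rpow_sub_one_pos {g h : X → ℝ} {c : ℝ} (hs : s ≠ 0) (hc : 0 < c)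
    (hh0 : ∀ x, 0 ≤ h x) (hgh : ∀ x, c * h x ≤ g x) (hint : Integrable (fun x => h x ^ s) ν)
    (hpos : 0 < ∫ x, h x ^ s ∂ν) (hgint : Integrable (fun x => g x * h x ^ (s - 1)) ν) :
    0 < ∫ x, g x * h x ^ (s - 1) ∂ν :=
  calc 0 < c * ∫ x, h x ^ s ∂ν := mul_pos hc hpos
    _ = ∫ x, c * h x ^ s ∂ν := (integral_const_mul _ _).symm
    _ ≤ ∫ x, g x * h x ^ (s - 1) ∂ν :=
      integral_mono (hint.const_mul c) hgint fun x => le_mul_rpow_sub_one (hh0 x) hs (hgh x)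

lemma integrable_mixture_mul_rpow (hs : s ≠ 0) (hf0 : ∀ i x, 0 ≤ f i x)
    (hf : ∀ i, AEMeasurable (f i) ν) {a b : ι → ℝ} (ha : ∀ i, 0 ≤ a i) (hb : ∀ i, 0 < b i)
    (hint : Integrable (fun x => (∑ i, b i * f i x) ^ s) ν) :
    Integrable (fun x => (∑ i, a i * f i x) * (∑ i, b i * f i x) ^ (s - 1)) ν :=
  integrable_mul_rpow_sub_one_of_le hs (by fun_prop) (by fun_prop)
    (mixture_nonneg hf0 ha) (mixture_nonneg hf0 fun i => (hb i).le)
    (mixture_le_mul_mixture hf0 ha hb) hint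

lemma integral_mixture_mul_rpow_eq_sum (hs : s ≠ 0) (hf0 : ∀ i x, 0 ≤ f i x)
    (hf : ∀ i, AEMeasurable (f i) ν) (a : ι → ℝ) {b : ι → ℝ} (hb : ∀ i, 0 < b i)
    (hint : Integrable (fun x => (∑ i, b i * f i x) ^ s) ν) :
    ∫ x, (∑ i, a i * f i x) * (∑ i, b i * f i x) ^ (s - 1) ∂ν
      = ∑ i, a i * ∫ x, (∑ j, b j * f j x) ^ (s - 1) * f i x ∂ν := by
  have hterm (i : ι) : Integrable (fun x => (∑ j, b j * f j x) ^ (s - 1) * f i x) ν := by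
    simp_rw [mul_comm _ (f i _)]
    refine integrable_mul_rpow_sub_one_of_le (K := (b i)⁻¹) hs (hf i) (by fun_prop) (hf0 i)
      (mixture_nonneg hf0 fun j => (hb j).le) (fun x => ?_) hint
    rw [le_inv_mul_iff₀ (hb i)]
    exact mul_le_mixture hf0 (fun j => (hb j).le) i x
  calc ∫ x, (∑ i, a i * f i x) * (∑ i, b i * f i x) ^ (s - 1) ∂ν
      = ∫ x, ∑ i, a i * ((∑ j, b j * f j x) ^ (s - 1) * f i x) ∂ν := by
        congr with x
        rw [Finset.sum_mul]
        congr with i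
        ring
    _ = _ := by
      rw [integral_finsetSum _ fun i _ => (hterm i).const_mul (a i)]
      simp_rw [integral_const_mul]

lemma integral_mixture_mul_rpow_pos [Nonempty ι] (hs : s ≠ 0) (hf0 : ∀ i x, 0 ≤ f i x)
    (hf : ∀ i, AEMeasurable (f i) ν) {a b : ι → ℝ} (ha : ∀ i, 0 < a i) (hb : ∀ i, 0 < b i)
    (hint : Integrable (fun x => (∑ i, b i * f i x) ^ s) ν)
    (hpos : 0 < ∫ x, (∑ i, b i * f i x) ^ s ∂ν) :
    0 < ∫ x, (∑ i, a i * f i x) * (∑ i, b i * f i x) ^ (s - 1) ∂ν := by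
  have hK : 0 < ∑ i, b i / a i :=
    Finset.sum_pos (fun i _ => div_pos (hb i) (ha i)) Finset.univ_nonempty
  refine integral_mul_rpow_sub_one_pos hs (inv_pos.2 hK)
    (mixture_nonneg hf0 fun i => (hb i).le) (fun x => ?_) hint hpos
    (integrable_mixture_mul_rpow hs hf0 hf (fun i => (ha i).le) hb hint)
  rw [inv_mul_le_iff₀ hK]
  exact mixture_le_mul_mixture hf0 (fun i => (hb i).le) ha x

lemma integral_rpow_mixture_pos (i : ι) (hs : 0 ≤ s) (hf0 : ∀ i x, 0 ≤ f i x) {b : ι → ℝ}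
    (hb : ∀ j, 0 ≤ b j) (hbi : 0 < b i) (hfi : Integrable (fun x => f i x ^ s) ν)
    (hfi_pos : 0 < ∫ x, f i x ^ s ∂ν) (hint : Integrable (fun x => (∑ j, b j * f j x) ^ s) ν) :
    0 < ∫ x, (∑ j, b j * f j x) ^ s ∂ν :=
  calc 0 < b i ^ s * ∫ x, f i x ^ s ∂ν := mul_pos (rpow_pos_of_pos hbi _) hfi_pos
    _ = ∫ x, (b i * f i x) ^ s ∂ν := by
      rw [← integral_const_mul]
      simp_rw [mul_rpow hbi.le (hf0 i _)]
    _ ≤ ∫ x, (∑ j, b j * f j x) ^ s ∂ν := by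
      refine integral_mono ((hfi.const_mul (b i ^ s)).congr ?_) hint fun x => ?_
      · exact ae_of_all _ fun x => (mul_rpow hbi.le (hf0 i x)).symm
      · exact rpow_le_rpow (mul_nonneg hbi.le (hf0 i x)) (mul_le_mixture hf0 hb i x) hs

end Mixture

section Renyi

variable {X : Type*} [MeasurableSpace X] {ν : Measure X} {f g : X → ℝ} {q : ℝ}

lemma integral_rpow_mul_rpow_le_one (hq0 : 0 ≤ q) (hq1 : q ≤ 1) (hf0 : ∀ x, 0 ≤ f x)
    (hg0 : ∀ x, 0 ≤ g x) (hf : Integrable f ν) (hg : Integrable g ν) (hf1 : ∫ x, f x ∂ν = 1)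
    (hg1 : ∫ x, g x ∂ν = 1) : ∫ x, f x ^ q * g x ^ (1 - q) ∂ν ≤ 1 :=
  calc ∫ x, f x ^ q * g x ^ (1 - q) ∂ν ≤ ∫ x, q * f x + (1 - q) * g x ∂ν :=
        integral_mono_of_nonneg
          (ae_of_all _ fun x => mul_nonneg (rpow_nonneg (hf0 x) _) (rpow_nonneg (hg0 x) _))
          ((hf.const_mul q).add (hg.const_mul (1 - q))) <| ae_of_all _ fun x =>
            geom_mean_le_arith_mean2_weighted hq0 (by linarith) (hf0 x) (hg0 x) (by ring)
    _ = 1 := by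
      rw [integral_add (hf.const_mul q) (hg.const_mul (1 - q)), integral_const_mul,
        integral_const_mul, hf1, hg1]
      ring

lemma one_le_integral_rpow_mul_rpow (hq : 1 ≤ q) (hf0 : ∀ x, 0 ≤ f x) (hg0 : ∀ x, 0 ≤ g x)
    (hf : Integrable f ν) (hg : Integrable g ν) (hf1 : ∫ x, f x ∂ν = 1) (hg1 : ∫ x, g x ∂ν = 1)
    (hfg : ∀ x, g x = 0 → f x = 0) (hint : Integrable (fun x => f x ^ q * g x ^ (1 - q)) ν) :
    1 ≤ ∫ x, f x ^ q * g x ^ (1 - q) ∂ν :=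
  calc 1 = ∫ x, q * f x + (1 - q) * g x ∂ν := by
        rw [integral_add (hf.const_mul q) (hg.const_mul (1 - q)), integral_const_mul,
          integral_const_mul, hf1, hg1]
        ring
    _ ≤ ∫ x, f x ^ q * g x ^ (1 - q) ∂ν :=
      integral_mono ((hf.const_mul q).add (hg.const_mul (1 - q))) hint fun x =>
        add_le_rpow_mul_rpow_of_one_le (hf0 x) (hg0 x) hq (hfg x)

lemma renyi_divergence_nonneg (hq0 : 0 < q) (hq1 : q ≠ 1) (hf0 : ∀ x, 0 ≤ f x)
    (hg0 : ∀ x, 0 ≤ g x) (hf : Integrable f ν) (hg : Integrable g ν) (hf1 : ∫ x, f x ∂ν = 1)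
    (hg1 : ∫ x, g x ∂ν = 1) (hfg : ∀ x, g x = 0 → f x = 0)
    (hint : Integrable (fun x => f x ^ q * g x ^ (1 - q)) ν) :
    0 ≤ 1 / (q - 1) * log (∫ x, f x ^ q * g x ^ (1 - q) ∂ν) := by
  rcases hq1.lt_or_gt with hlt | hgt
  · refine mul_nonneg_of_nonpos_of_nonpos (one_div_nonpos.2 (by linarith)) (log_nonpos
      (integral_nonneg fun x => mul_nonneg (rpow_nonneg (hf0 x) _) (rpow_nonneg (hg0 x) _)) ?_)
    exact integral_rpow_mul_rpow_le_one hq0.le hlt.le hf0 hg0 hf hg hf1 hg1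
  · exact mul_nonneg (one_div_nonneg.2 (by linarith))
      (log_nonneg (one_le_integral_rpow_mul_rpow hgt.le hf0 hg0 hf hg hf1 hg1 hfg hint))

end Renyi

lemma density_of_div_integral {X : Type*} [MeasurableSpace X] {ν : Measure X} {h P : X → ℝ}
    (hP : ∀ x, P x = h x / ∫ y, h y ∂ν) (h0 : ∀ x, 0 ≤ h x) (hint : Integrable h ν)
    (hpos : 0 < ∫ x, h x ∂ν) : (∀ x, 0 ≤ P x) ∧ Integrable P ν ∧ ∫ x, P x ∂ν = 1 := by
  obtain rfl : P = fun x => h x / ∫ y, h y ∂ν := funext hP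
  exact ⟨fun x => div_nonneg (h0 x) hpos.le, hint.div_const _,
    by rw [integral_div, div_self hpos.ne']⟩

lemma lambdaMixture_logDivergence_eq_renyi {ι X : Type*} [Fintype ι] [Nonempty ι]
    [MeasurableSpace X] {ν : Measure X} {q : ℝ} (hq0 : 0 < q) (hq1 : q ≠ 1)
    {f : ι → X → ℝ} (hf0 : ∀ i x, 0 ≤ f i x) (hf : ∀ i, AEMeasurable (f i) ν)
    {Z ψ : EuclideanSpace ℝ ι → ℝ} {P : EuclideanSpace ℝ ι → X → ℝ}
    (hZ : ∀ η, Z η = ∫ x, (∑ i, η i * f i x) ^ (1 / q) ∂ν)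
    (hP : ∀ η x, P η x = (∑ i, η i * f i x) ^ (1 / q) / Z η)
    (hψ : ∀ η : EuclideanSpace ℝ ι, (∀ i, 0 < η i) → ψ η = q / (1 - q) * log (Z η))
    {η η' : EuclideanSpace ℝ ι} (hη : ∀ i, 0 < η i) (hη' : ∀ i, 0 < η' i)
    (hint : Integrable (fun x => (∑ i, η i * f i x) ^ (1 / q)) ν)
    (hint' : Integrable (fun x => (∑ i, η' i * f i x) ^ (1 / q)) ν)
    (hZη : 0 < Z η) (hZη' : 0 < Z η')
    (hgrad : ∀ i, gradient ψ η' i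
      = 1 / (1 - q) * (∫ x, (∑ j, η' j * f j x) ^ (1 / q - 1) * f i x ∂ν) / Z η') :
    (0 < 1 + (1 - q) * ⟪gradient ψ η', η - η'⟫ ∧
      1 + (1 - q) * ⟪gradient ψ η', η - η'⟫
        = Z η ^ q / Z η' ^ q * ∫ x, P η x ^ q * P η' x ^ (1 - q) ∂ν) ∧
    (ψ η - ψ η' - 1 / (1 - q) * log (1 + (1 - q) * ⟪gradient ψ η', η - η'⟫)
        = 1 / (q - 1) * log (∫ x, P η x ^ q * P η' x ^ (1 - q) ∂ν)) ∧
    0 ≤ ψ η - ψ η' - 1 / (1 - q) * log (1 + (1 - q) * ⟪gradient ψ η', η - η'⟫) := by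
  have hs : 1 / q ≠ 0 := by positivity
  have hu0 := mixture_nonneg hf0 fun i => (hη i).le
  have hu0' := mixture_nonneg hf0 fun i => (hη' i).le
  set I := ∫ x, (∑ i, η i * f i x) * (∑ i, η' i * f i x) ^ (1 / q - 1) ∂ν
  have hI : 0 < I := integral_mixture_mul_rpow_pos hs hf0 hf hη hη' hint' (hZ η' ▸ hZη')
  have hself : ∑ i, η' i * ∫ x, (∑ j, η' j * f j x) ^ (1 / q - 1) * f i x ∂ν = Z η' := by
    rw [← integral_mixture_mul_rpow_eq_sum hs hf0 hf _ hη' hint', hZ]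
    simp_rw [mul_rpow_sub_one (hu0' _) hs]
  have hT : 1 + (1 - q) * ⟪gradient ψ η', η - η'⟫ = I / Z η' := by
    rw [one_add_mul_inner_sub_eq (sub_ne_zero.2 hq1.symm) hZη'.ne' hgrad hself,
      ← integral_mixture_mul_rpow_eq_sum hs hf0 hf _ hη' hint']
  have hJpt (x : X) : P η x ^ q * P η' x ^ (1 - q)
      = (∑ i, η i * f i x) * (∑ i, η' i * f i x) ^ (1 / q - 1) / (Z η ^ q * Z η' ^ (1 - q)) := by
    rw [hP, hP]
    exact rpow_one_div_div_rpow_mul (hu0 x) (hu0' x) hZη.le hZη'.le hq0.ne'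
  have hJ : ∫ x, P η x ^ q * P η' x ^ (1 - q) ∂ν = I / (Z η ^ q * Z η' ^ (1 - q)) := by
    simp_rw [hJpt]; exact integral_div _ _
  have hlog : ψ η - ψ η' - 1 / (1 - q) * log (1 + (1 - q) * ⟪gradient ψ η', η - η'⟫)
      = 1 / (q - 1) * log (∫ x, P η x ^ q * P η' x ^ (1 - q) ∂ν) := by
    have h1q : 1 - q ≠ 0 := sub_ne_zero.2 hq1.symm
    have hq1' : q - 1 ≠ 0 := sub_ne_zero.2 hq1
    rw [hψ η hη, hψ η' hη', hT, hJ, log_div hI.ne' hZη'.ne', log_div hI.ne' (by positivity),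
      log_mul (by positivity) (by positivity), log_rpow hZη, log_rpow hZη']
    field_simp
    ring
  have hsupp (x : X) (hx : P η' x = 0) : P η x = 0 := by
    have hu' : ∑ i, η' i * f i x = 0 := by
      rwa [hP, div_eq_zero_iff, or_iff_left hZη'.ne', rpow_eq_zero (hu0' x) hs] at hx
    have hu : ∑ i, η i * f i x = 0 := le_antisymm
      ((mixture_le_mul_mixture hf0 (fun i => (hη i).le) hη' x).trans_eq
        (by rw [hu', mul_zero])) (hu0 x)
    rw [hP, hu, zero_rpow hs, zero_div]
  obtain ⟨hP0, hPint, hP1⟩ := density_of_div_integral (fun x => (hP η x).trans (by rw [hZ]))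
    (fun x => rpow_nonneg (hu0 x) _) hint (hZ η ▸ hZη)
  obtain ⟨hP0', hPint', hP1'⟩ := density_of_div_integral (fun x => (hP η' x).trans (by rw [hZ]))
    (fun x => rpow_nonneg (hu0' x) _) hint' (hZ η' ▸ hZη')
  have hJint : Integrable (fun x => P η x ^ q * P η' x ^ (1 - q)) ν :=
    funext hJpt ▸ (integrable_mixture_mul_rpow hs hf0 hf (fun i => (hη i).le) hη' hint').div_const _
  refine ⟨⟨hT ▸ div_pos hI hZη', ?_⟩, hlog, hlog ▸ renyi_divergence_nonneg hq0 hq1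
    hP0 hP0' hPint hPint' hP1 hP1' hsupp hJint⟩
  rw [hT, hJ, rpow_sub hZη', rpow_one]
  field_simp

theorem lambdaMixture_Renyi_general {d : ℕ} {X : Type*} [MeasurableSpace X] (ν : Measure X)
    (lam q : ℝ) (hlam0 : lam ≠ 0) (hlam1 : lam < 1) (hq : q = 1 - lam)
    (p : Fin (d + 1) → X → ℝ) (hpnn : ∀ i x, 0 ≤ p i x)
    (hprob : ∀ i, ∫ x, p i x ∂ν = 1)
    (hpq : ∀ i, Integrable (fun x => p i x ^ q) ν)
    (hpqpos : ∀ i, 0 < ∫ x, p i x ^ q ∂ν)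
    (pt : Fin (d + 1) → X → ℝ)
    (hpt : ∀ i x, pt i x = p i x ^ q / ∫ z, p i z ^ q ∂ν)
    (S : Set (EuclideanSpace ℝ (Fin (d + 1))))
    (hS : S = {η | (∀ i, 0 < η i) ∧ ∑ i, η i = 1})
    (Z : EuclideanSpace ℝ (Fin (d + 1)) → ℝ)
    (hZ : ∀ η, Z η = ∫ x, (∑ i, η i * pt i x) ^ (1 / q) ∂ν)
    (hZint : ∀ η ∈ S, Integrable (fun x => (∑ i, η i * pt i x) ^ (1 / q)) ν)
    (ψ : EuclideanSpace ℝ (Fin (d + 1)) → ℝ)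
    (hψ : ∀ η : EuclideanSpace ℝ (Fin (d + 1)), (∀ i, 0 < η i) →
      ψ η = (q / (1 - q)) * Real.log (Z η))
    (hDUI : ∀ η ∈ S, ∀ i, gradient ψ η i
      = (1 / (1 - q)) * (∫ x, (∑ j, η j * pt j x) ^ (1 / q - 1) * pt i x ∂ν) / Z η)
    (pη : EuclideanSpace ℝ (Fin (d + 1)) → X → ℝ)
    (hpη : ∀ η x, pη η x = (∑ i, η i * pt i x) ^ (1 / q) / Z η) :
    (∀ η ∈ S, ∀ η' ∈ S,
      (0 < 1 + lam * ⟪gradient ψ η', η - η'⟫ ∧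
        1 + lam * ⟪gradient ψ η', η - η'⟫
          = (Z η ^ q / Z η' ^ q) * ∫ x, pη η x ^ q * pη η' x ^ (1 - q) ∂ν) ∧
      (ψ η - ψ η' - (1 / lam) * Real.log (1 + lam * ⟪gradient ψ η', η - η'⟫)
          = (1 / (q - 1)) * Real.log (∫ x, pη η x ^ q * pη η' x ^ (1 - q) ∂ν)) ∧
      0 ≤ ψ η - ψ η' - (1 / lam) * Real.log (1 + lam * ⟪gradient ψ η', η - η'⟫)) ∧
    ConvexOn ℝ S (fun η => (1 / lam) * (Real.exp (lam * ψ η) - 1)) := by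
  obtain rfl : lam = 1 - q := by linarith
  have hq0 : 0 < q := by linarith
  have hq1 : q ≠ 1 := by contrapose! hlam0; linarith
  have hpt0 (i : Fin (d + 1)) (x : X) : 0 ≤ pt i x :=
    hpt i x ▸ div_nonneg (rpow_nonneg (hpnn i x) q) (hpqpos i).le
  have hptm (i : Fin (d + 1)) : AEMeasurable (pt i) ν :=
    funext (hpt i) ▸ (hpq i).aemeasurable.div_const _
  have hSpos : ∀ η ∈ S, ∀ i, 0 < η i := fun η hη => (hS ▸ hη).1
  have hpt_rpow (x : X) : pt 0 x ^ (1 / q) = p 0 x / (∫ z, p 0 z ^ q ∂ν) ^ (1 / q) := by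
    rw [hpt]; exact div_rpow_one_div (hpnn 0 x) (hpqpos 0).le hq0.ne'
  have hZpos : ∀ η ∈ S, 0 < Z η := fun η hη => by
    have hp0 : Integrable (p 0) ν := .of_integral_ne_zero (by simp [hprob])
    rw [hZ]
    refine integral_rpow_mixture_pos 0 (by positivity) hpt0 (fun j => (hSpos η hη j).le)
      (hSpos η hη 0) ?_ ?_ (hZint η hη) <;> simp_rw [hpt_rpow]
    · exact hp0.div_const _
    · rw [integral_div, hprob]; exact one_div_pos.2 (rpow_pos_of_pos (hpqpos 0) _)
  have hpair := fun η (hη : η ∈ S) η' (hη' : η' ∈ S) =>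
    lambdaMixture_logDivergence_eq_renyi hq0 hq1 hpt0 hptm hZ hpη hψ (hSpos η hη) (hSpos η' hη')
      (hZint η hη) (hZint η' hη') (hZpos η hη) (hZpos η' hη') (hDUI η' hη')
  exact ⟨hpair, convexOn_one_div_mul_exp_sub_one hlam0 (hS ▸ convex_openSimplex)
    fun η hη η' hη' => ⟨(hpair η hη η' hη').1.1, (hpair η hη η' hη').2.2⟩⟩

/-- λ-mixture family and Rényi divergence (`λ < 1`, `λ ≠ 0`, `q = 1 − λ > 0`):
with escort densities `p̃_i = p_i^q/∫p_i^q dν`, `Z(η) = ∫ (Σ_i η_i p̃_i)^{1/q} dν`,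
`ψ(η) = (q/(1−q))·log Z(η)` (the negative Rényi entropy of the λ-mixture `p_η`), and
differentiation under the integral sign: (a) for `η, η'` in the open unit simplex,
`1 + λ∇ψ(η')·(η − η') = (Z(η)^q/Z(η')^q)·∫ p_η^q p_{η'}^{1−q} dν > 0` and the λ-logarithmic
divergence of `ψ` equals the Rényi divergence `H_q(p_η ‖ p_{η'}) ≥ 0`; and
(b) `(1/λ)(e^{λψ} − 1)` is convex on the open unit simplex. -/
theorem lambdaMixture_Renyi {d : ℕ} {X : Type*} [MeasurableSpace X] (ν : Measure X)
    (lam q : ℝ) (hlam0 : lam ≠ 0) (hlam1 : lam < 1) (hq : q = 1 - lam)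
    (p : Fin (d + 1) → X → ℝ) (hpnn : ∀ i x, 0 ≤ p i x)
    (hprob : ∀ i, ∫ x, p i x ∂ν = 1)
    (hpq : ∀ i, Integrable (fun x => p i x ^ q) ν)
    (hpqpos : ∀ i, 0 < ∫ x, p i x ^ q ∂ν)
    (pt : Fin (d + 1) → X → ℝ)
    (hpt : ∀ i x, pt i x = p i x ^ q / ∫ z, p i z ^ q ∂ν)
    (S : Set (EuclideanSpace ℝ (Fin (d + 1))))
    (hS : S = {η | (∀ i, 0 < η i) ∧ ∑ i, η i = 1})
    (Z : EuclideanSpace ℝ (Fin (d + 1)) → ℝ)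
    (hZ : ∀ η, Z η = ∫ x, (∑ i, η i * pt i x) ^ (1 / q) ∂ν)
    (hZint : ∀ η ∈ S, Integrable (fun x => (∑ i, η i * pt i x) ^ (1 / q)) ν)
    (ψ : EuclideanSpace ℝ (Fin (d + 1)) → ℝ)
    (hψ : ∀ η : EuclideanSpace ℝ (Fin (d + 1)), (∀ i, 0 < η i) →
      ψ η = (q / (1 - q)) * Real.log (Z η))
    (hdiff : ∀ η ∈ S, DifferentiableAt ℝ ψ η)
    (hDUI : ∀ η ∈ S, ∀ i, gradient ψ η i
      = (1 / (1 - q)) * (∫ x, (∑ j, η j * pt j x) ^ (1 / q - 1) * pt i x ∂ν) / Z η)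
    (pη : EuclideanSpace ℝ (Fin (d + 1)) → X → ℝ)
    (hpη : ∀ η x, pη η x = (∑ i, η i * pt i x) ^ (1 / q) / Z η) :
    (∀ η ∈ S, ∀ η' ∈ S,
      (0 < 1 + lam * ⟪gradient ψ η', η - η'⟫ ∧
        1 + lam * ⟪gradient ψ η', η - η'⟫
          = (Z η ^ q / Z η' ^ q) * ∫ x, pη η x ^ q * pη η' x ^ (1 - q) ∂ν) ∧
      (ψ η - ψ η' - (1 / lam) * Real.log (1 + lam * ⟪gradient ψ η', η - η'⟫)
          = (1 / (q - 1)) * Real.log (∫ x, pη η x ^ q * pη η' x ^ (1 - q) ∂ν)) ∧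
      0 ≤ ψ η - ψ η' - (1 / lam) * Real.log (1 + lam * ⟪gradient ψ η', η - η'⟫)) ∧
    ConvexOn ℝ S (fun η => (1 / lam) * (Real.exp (lam * ψ η) - 1)) :=
  lambdaMixture_Renyi_general ν lam q hlam0 hlam1 hq p hpnn hprob hpq hpqpos pt hpt S hS Z hZ hZint
    ψ hψ hDUI pη hpη
end

section
/- Fix λ with λ ≠ 0, 1 and q = 1 − λ. Let p₀,…,p_d be probability densities w.r.t. ν with Z_i := ∫ p_i^q dν ∈ (0,∞), and let η be in the closed unit simplex with λ-mixture density p_η = (Σ_i η_i p_i^q/Z_i)^{1/q} / ∫ (Σ_j η_j p_j^q/Z_j)^{1/q} dν (assumed well-defined). Set α = 2λ − 1 and w_i = (η_i/Z_i)/(Σ_j η_j/Z_j). Then p_η equals the α-mixture p_α(·;w) = c(w)·(Σ_i w_i p_i^{(1−α)/2})^{2/(1−α)} with the normalizing constant c(w); moreover the parameter maps η ↦ w and w ↦ η, with η_i = w_i Z_i / Σ_j w_j Z_j, are mutually inverse bijections of the simplex. Hence a λ-mixture family is a reparameterization of the α-mixture family with α = 2λ − 1. -/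
open MeasureTheory Real
open scoped RealInnerProductSpace ENNReal BigOperators

/-!
The escort of `pᵢ` is `pᵢ^q / Zᵢ`, so the λ-mixture `Σᵢ ηᵢ pᵢ^q / Zᵢ` equals `S · Σᵢ wᵢ pᵢ^q` with
`S = Σⱼ ηⱼ / Zⱼ`; taking the `1/q`-th power only contributes the factor `S^{1/q}`, which the
normalizing constant absorbs. Both parameter maps are "multiply coordinatewise, then normalize",
by `1/Zᵢ` and by `Zᵢ` respectively, so they are mutually inverse on the simplex.
-/

section NormalizeWeights

variable {ι 𝕜 : Type*} [Fintype ι] [Field 𝕜]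

def normalizeWeights (f : ι → 𝕜) (i : ι) : 𝕜 := f i / ∑ j, f j

theorem sum_normalizeWeights {f : ι → 𝕜} (hf : ∑ j, f j ≠ 0) :
    ∑ i, normalizeWeights f i = 1 := by
  simp only [normalizeWeights, ← Finset.sum_div, div_self hf]

theorem normalizeWeights_of_sum_eq_one {f : ι → 𝕜} (hf : ∑ j, f j = 1) :
    normalizeWeights f = f := by
  ext i
  simp only [normalizeWeights, hf, div_one]

theorem normalizeWeights_const_mul {c : 𝕜} (hc : c ≠ 0) (f : ι → 𝕜) :
    normalizeWeights (fun i => c * f i) = normalizeWeights f := by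
  ext i
  simp only [normalizeWeights, ← Finset.mul_sum, mul_div_mul_left _ _ hc]

theorem normalizeWeights_normalizeWeights_mul {f : ι → 𝕜} (hf : ∑ j, f j ≠ 0) (g : ι → 𝕜) :
    normalizeWeights (fun i => normalizeWeights f i * g i) =
      normalizeWeights (fun i => f i * g i) := by
  simpa only [normalizeWeights, div_mul_eq_mul_div, div_eq_inv_mul, mul_assoc]
    using normalizeWeights_const_mul (inv_ne_zero hf) (fun i => f i * g i)

theorem normalizeWeights_normalizeWeights_div {f : ι → 𝕜} (hf : ∑ j, f j ≠ 0) (g : ι → 𝕜) :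
    normalizeWeights (fun i => normalizeWeights f i / g i) =
      normalizeWeights (fun i => f i / g i) := by
  simpa only [div_eq_mul_inv] using normalizeWeights_normalizeWeights_mul hf (fun i => (g i)⁻¹)

theorem sum_mul_eq_sum_mul_normalizeWeights {f : ι → 𝕜} (hf : ∑ j, f j ≠ 0) (g : ι → 𝕜) :
    ∑ i, f i * g i = (∑ j, f j) * ∑ i, normalizeWeights f i * g i := by
  simp only [normalizeWeights, Finset.mul_sum, div_mul_eq_mul_div, mul_div_cancel₀ _ hf]

theorem normalizeWeights_div_mul_cancel {f Z : ι → 𝕜} (hZ : ∀ i, Z i ≠ 0)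
    (hf : ∑ j, f j / Z j ≠ 0) (hf1 : ∑ j, f j = 1) :
    normalizeWeights (fun i => normalizeWeights (fun j => f j / Z j) i * Z i) = f := by
  rw [normalizeWeights_normalizeWeights_mul hf]
  simp only [div_mul_cancel₀ _ (hZ _)]
  exact normalizeWeights_of_sum_eq_one hf1

theorem normalizeWeights_mul_div_cancel {f Z : ι → 𝕜} (hZ : ∀ i, Z i ≠ 0)
    (hf : ∑ j, f j * Z j ≠ 0) (hf1 : ∑ j, f j = 1) :
    normalizeWeights (fun i => normalizeWeights (fun j => f j * Z j) i / Z i) = f := by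
  rw [normalizeWeights_normalizeWeights_div hf]
  simp only [mul_div_cancel_right₀ _ (hZ _)]
  exact normalizeWeights_of_sum_eq_one hf1

variable [LinearOrder 𝕜] [IsStrictOrderedRing 𝕜]

theorem normalizeWeights_nonneg {f : ι → 𝕜} (hf : ∀ i, 0 ≤ f i) (i : ι) :
    0 ≤ normalizeWeights f i :=
  div_nonneg (hf i) (Finset.sum_nonneg fun j _ => hf j)

theorem sum_mul_pos_of_sum_eq_one {a b : ι → 𝕜} (ha : ∀ i, 0 ≤ a i) (ha1 : ∑ i, a i = 1)
    (hb : ∀ i, 0 < b i) : 0 < ∑ i, a i * b i := by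
  obtain ⟨i, -, hi⟩ := Finset.exists_ne_zero_of_sum_ne_zero (ha1 ▸ one_ne_zero : ∑ i, a i ≠ 0)
  exact Finset.sum_pos' (fun j _ => mul_nonneg (ha j) (hb j).le)
    ⟨i, Finset.mem_univ i, mul_pos ((ha i).lt_of_ne' hi) (hb i)⟩

end NormalizeWeights

theorem lambdaMixture_reparam_alphaMixture_general {d : ℕ} {X : Type*} [MeasurableSpace X]
    (ν : Measure X)
    (q : ℝ)
    (p : Fin (d + 1) → X → ℝ) (hpnn : ∀ i x, 0 ≤ p i x)
    (Z : Fin (d + 1) → ℝ)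
    (hZpos : ∀ i, 0 < Z i)
    (η : Fin (d + 1) → ℝ) (hη0 : ∀ i, 0 ≤ η i) (hη1 : ∑ i, η i = 1)
    (D : ℝ) (hD : D = ∫ x, (∑ i, η i * (p i x ^ q / Z i)) ^ (1 / q) ∂ν) (hDpos : 0 < D)
    (pη : X → ℝ) (hpη : ∀ x, pη x = (∑ i, η i * (p i x ^ q / Z i)) ^ (1 / q) / D)
    (w : Fin (d + 1) → ℝ) (hw : ∀ i, w i = (η i / Z i) / ∑ j, η j / Z j) :
    (∀ i, 0 ≤ w i) ∧ (∑ i, w i = 1) ∧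
    (∀ i, w i * Z i / (∑ j, w j * Z j) = η i) ∧
    (∃ c : ℝ, 0 < c ∧ (∀ x, pη x = c * (∑ i, w i * p i x ^ q) ^ (1 / q)) ∧
      ∫ x, c * (∑ i, w i * p i x ^ q) ^ (1 / q) ∂ν = 1) ∧
    (∀ w' : Fin (d + 1) → ℝ, (∀ i, 0 ≤ w' i) → (∑ i, w' i = 1) →
      (∀ i, 0 ≤ w' i * Z i / ∑ j, w' j * Z j) ∧
      (∑ i, w' i * Z i / ∑ j, w' j * Z j) = 1 ∧
      ∀ i, ((w' i * Z i / ∑ j, w' j * Z j) / Z i) /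
          (∑ j, (w' j * Z j / ∑ k, w' k * Z k) / Z j) = w' i) := by
  have hS : 0 < ∑ j, η j / Z j := by
    simpa only [div_eq_mul_inv] using sum_mul_pos_of_sum_eq_one hη0 hη1 fun i => inv_pos.2 (hZpos i)
  set S := ∑ j, η j / Z j
  have hw_def : w = normalizeWeights (fun i => η i / Z i) := funext hw
  have hw0 : ∀ i, 0 ≤ w i :=
    hw_def ▸ normalizeWeights_nonneg fun i => div_nonneg (hη0 i) (hZpos i).le
  have hpη_alpha : ∀ x, pη x = S ^ (1 / q) / D * (∑ i, w i * p i x ^ q) ^ (1 / q) := fun x => by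
    have hsum : ∑ i, η i * (p i x ^ q / Z i) = S * ∑ i, w i * p i x ^ q := by
      rw [hw_def, ← sum_mul_eq_sum_mul_normalizeWeights hS.ne']
      simp only [mul_div_assoc', div_mul_eq_mul_div]
    have hmix : 0 ≤ ∑ i, w i * p i x ^ q :=
      Finset.sum_nonneg fun i _ => mul_nonneg (hw0 i) (rpow_nonneg (hpnn i x) q)
    rw [hpη, hsum, mul_rpow hS.le hmix, mul_div_right_comm]
  refine ⟨hw0, hw_def ▸ sum_normalizeWeights hS.ne', fun i => ?_,
    ⟨S ^ (1 / q) / D, div_pos (rpow_pos_of_pos hS _) hDpos, hpη_alpha, ?_⟩,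
    fun w' hw'0 hw'1 => ?_⟩
  · rw [hw_def]
    exact congrFun (normalizeWeights_div_mul_cancel (fun i => (hZpos i).ne') hS.ne' hη1) i
  · simp only [← hpη_alpha, hpη, integral_div, ← hD, div_self hDpos.ne']
  · have hT : ∑ j, w' j * Z j ≠ 0 := (sum_mul_pos_of_sum_eq_one hw'0 hw'1 hZpos).ne'
    exact ⟨normalizeWeights_nonneg fun i => mul_nonneg (hw'0 i) (hZpos i).le,
      sum_normalizeWeights hT,
      congrFun (normalizeWeights_mul_div_cancel (fun i => (hZpos i).ne') hT hw'1)⟩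

/-- A λ-mixture family is a reparameterization of the α-mixture family with
`α = 2λ − 1` (so `(1−α)/2 = q = 1 − λ`): with `Z_i = ∫ p_i^q dν ∈ (0,∞)` and
`w_i = (η_i/Z_i)/Σ_j(η_j/Z_j)`, the λ-mixture density `p_η` equals the normalized α-mixture
`c(w)·(Σ_i w_i p_i^q)^{1/q}`, and the parameter maps `η ↦ w`, `w ↦ η` (with
`η_i = w_i Z_i/Σ_j w_j Z_j`) are mutually inverse bijections of the simplex. -/
theorem lambdaMixture_reparam_alphaMixture {d : ℕ} {X : Type*} [MeasurableSpace X]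
    (ν : Measure X)
    (lam q : ℝ) (hlam0 : lam ≠ 0) (hlam1 : lam ≠ 1) (hq : q = 1 - lam)
    (p : Fin (d + 1) → X → ℝ) (hpnn : ∀ i x, 0 ≤ p i x)
    (hprob : ∀ i, ∫ x, p i x ∂ν = 1)
    (Z : Fin (d + 1) → ℝ) (hZ : ∀ i, Z i = ∫ x, p i x ^ q ∂ν)
    (hZpos : ∀ i, 0 < Z i) (hZint : ∀ i, Integrable (fun x => p i x ^ q) ν)
    (η : Fin (d + 1) → ℝ) (hη0 : ∀ i, 0 ≤ η i) (hη1 : ∑ i, η i = 1)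
    (D : ℝ) (hD : D = ∫ x, (∑ i, η i * (p i x ^ q / Z i)) ^ (1 / q) ∂ν) (hDpos : 0 < D)
    (pη : X → ℝ) (hpη : ∀ x, pη x = (∑ i, η i * (p i x ^ q / Z i)) ^ (1 / q) / D)
    (w : Fin (d + 1) → ℝ) (hw : ∀ i, w i = (η i / Z i) / ∑ j, η j / Z j) :
    (∀ i, 0 ≤ w i) ∧ (∑ i, w i = 1) ∧
    (∀ i, w i * Z i / (∑ j, w j * Z j) = η i) ∧
    (∃ c : ℝ, 0 < c ∧ (∀ x, pη x = c * (∑ i, w i * p i x ^ q) ^ (1 / q)) ∧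
      ∫ x, c * (∑ i, w i * p i x ^ q) ^ (1 / q) ∂ν = 1) ∧
    (∀ w' : Fin (d + 1) → ℝ, (∀ i, 0 ≤ w' i) → (∑ i, w' i = 1) →
      (∀ i, 0 ≤ w' i * Z i / ∑ j, w' j * Z j) ∧
      (∑ i, w' i * Z i / ∑ j, w' j * Z j) = 1 ∧
      ∀ i, ((w' i * Z i / ∑ j, w' j * Z j) / Z i) /
          (∑ j, (w' j * Z j / ∑ k, w' k * Z k) / Z j) = w' i) :=
  lambdaMixture_reparam_alphaMixture_general ν q p hpnn Z hZpos η hη0 hη1 D hD hDpos pη hpη w hw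
end
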